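/- arXiv:2210.02563 — 3 statements merged into one kernel-verified Lean document; each statement's English description precedes it below -/
import Mathlib

section
/- If u = (cos θ, sin θ) and v = (-sin θ, cos θ) are orthonormal vector fields in the plane determined by a smooth angle field θ, and L = e^H is a smooth positive scaling, then the vector fields Lu and Lv commute (their Lie bracket vanishes) if and only if ∇_u H = ∇_v θ and ∇_v H = -∇_u θ. -/
open Real

/-- Directional derivative of a scalar field on the plane. -/
noncomputable def dirDeriv (f : ℝ × ℝ → ℝ) (p w : ℝ × ℝ) : ℝ := fderiv ℝ f p w

/-- Lie bracket of two vector fields on ℝ² with respect to the flat connection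
(componentwise directional derivatives): [X,Y] = ∇_X Y - ∇_Y X. -/
noncomputable def lieBracket (X Y : ℝ × ℝ → ℝ × ℝ) (p : ℝ × ℝ) : ℝ × ℝ :=
  fderiv ℝ Y p (X p) - fderiv ℝ X p (Y p)

/-- with u = (cos θ, sin θ), v = (-sin θ, cos θ) and L = e^H smooth,
the vector fields Lu and Lv commute iff ∇_u H = ∇_v θ and ∇_v H = -∇_u θ. -/
theorem stmt0 (θ H : ℝ × ℝ → ℝ) (hθ : ContDiff ℝ (⊤ : ℕ∞) θ) (hH : ContDiff ℝ (⊤ : ℕ∞) H)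
    (u v : ℝ × ℝ → ℝ × ℝ) (L : ℝ × ℝ → ℝ)
    (hu : ∀ p, u p = (Real.cos (θ p), Real.sin (θ p)))
    (hv : ∀ p, v p = (-Real.sin (θ p), Real.cos (θ p)))
    (hL : ∀ p, L p = Real.exp (H p)) :
    (∀ p, lieBracket (fun q => L q • u q) (fun q => L q • v q) p = 0) ↔
      (∀ p, dirDeriv H p (u p) = dirDeriv θ p (v p) ∧
            dirDeriv H p (v p) = - dirDeriv θ p (u p)) := by
  have hu' : u = fun q => (Real.cos (θ q), Real.sin (θ q)) := funext hu
  have hv' : v = fun q => (-Real.sin (θ q), Real.cos (θ q)) := funext hv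
  have hL' : L = fun q => Real.exp (H q) := funext hL
  subst hu' hv' hL'
  apply forall_congr'
  intro p
  have hθd : HasFDerivAt θ (fderiv ℝ θ p) p := (hθ.differentiable (by simp) p).hasFDerivAt
  have hHd : HasFDerivAt H (fderiv ℝ H p) p := (hH.differentiable (by simp) p).hasFDerivAt
  set dθ := fderiv ℝ θ p with hdθ
  set dH := fderiv ℝ H p with hdH
  have hE : HasFDerivAt (fun q => Real.exp (H q)) (Real.exp (H p) • dH) p := hHd.exp
  have hU : HasFDerivAt (fun q => ((Real.cos (θ q), Real.sin (θ q)) : ℝ × ℝ))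
      ((-Real.sin (θ p) • dθ).prod (Real.cos (θ p) • dθ)) p := HasFDerivAt.prodMk hθd.cos hθd.sin
  have hV : HasFDerivAt (fun q => ((-Real.sin (θ q), Real.cos (θ q)) : ℝ × ℝ))
      ((-(Real.cos (θ p)) • dθ).prod (-Real.sin (θ p) • dθ)) p := by
    have := HasFDerivAt.prodMk (hθd.sin.neg) hθd.cos
    exact this.congr_fderiv (by ext x <;> simp)
  have hX : HasFDerivAt (fun q => Real.exp (H q) • ((Real.cos (θ q), Real.sin (θ q)) : ℝ × ℝ)) _ p := hE.smul hU
  have hY : HasFDerivAt (fun q => Real.exp (H q) • ((-Real.sin (θ q), Real.cos (θ q)) : ℝ × ℝ)) _ p := hE.smul hV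
  have key : ∀ (f : ℝ × ℝ →L[ℝ] ℝ) (e c s : ℝ), f (e * c, e * s) = e * f (c, s) := by
    intro f e c s
    have h : ((e * c, e * s) : ℝ × ℝ) = e • (c, s) := by simp [Prod.smul_mk]
    rw [h, map_smul, smul_eq_mul]
  rw [lieBracket, hX.fderiv, hY.fderiv, dirDeriv, dirDeriv, dirDeriv, dirDeriv, ← hdθ, ← hdH]
  simp only [ContinuousLinearMap.add_apply, ContinuousLinearMap.coe_smul', Pi.smul_apply,
    ContinuousLinearMap.smulRight_apply, ContinuousLinearMap.prod_apply, map_smul,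
    ContinuousLinearMap.smul_apply, Prod.smul_mk, smul_eq_mul, Prod.mk_add_mk,
    Prod.ext_iff, Prod.fst_sub, Prod.snd_sub, Prod.fst_zero, Prod.snd_zero, sub_eq_zero, key]
  set e := Real.exp (H p) with hedef
  set c := Real.cos (θ p) with hcdef
  set s := Real.sin (θ p) with hsdef
  set a := dθ (c, s) with hadef
  set b := dθ (-s, c) with hbdef
  set A := dH (c, s) with hAdef
  set B := dH (-s, c) with hBdef
  have hpy : c ^ 2 + s ^ 2 = 1 := Real.cos_sq_add_sin_sq (θ p)
  have he : e ≠ 0 := (Real.exp_pos _).ne'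
  have hE2 : e * e ≠ 0 := mul_ne_zero he he
  constructor
  · rintro ⟨h1, h2⟩
    have h1' : -c * a + -s * A = -s * b + c * B := by
      apply mul_left_cancel₀ hE2
      linear_combination h1
    have h2' : -s * a + c * A = c * b + s * B := by
      apply mul_left_cancel₀ hE2
      linear_combination h2
    constructor
    · linear_combination (-s) * h1' + c * h2' - (A - b) * hpy
    · linear_combination (-c) * h1' + (-s) * h2' - (B + a) * hpy
  · rintro ⟨h1, h2⟩
    constructor
    · linear_combination (e * e * (-c)) * h2 + (e * e * (-s)) * h1
    · linear_combination (e * e * (-s)) * h2 + (e * e * c) * h1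
end

section
/- With the Euler-angle frame (u, v, n) as above and P the orthogonal projection onto span{u, v}, the projected (tangential) covariant derivatives satisfy ∇_w u = (∇_w(θ+φ) + cos γ · ∇_w ψ) v and ∇_w v = −(∇_w(θ+φ) + cos γ · ∇_w ψ) u for any direction w. -/
open Real

/-- Euclidean dot product on ℝ × ℝ × ℝ. -/
def dot3 (a b : ℝ × ℝ × ℝ) : ℝ := a.1 * b.1 + a.2.1 * b.2.1 + a.2.2 * b.2.2

/-- Tangential (projected) covariant derivative of a vector field X in direction w at p,
projection onto the plane orthogonal to the unit field n:
∇_w X := ∇^E_w X − ⟨∇^E_w X, n⟩ n. -/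
noncomputable def tangDeriv (n X : ℝ × ℝ × ℝ → ℝ × ℝ × ℝ) (p w : ℝ × ℝ × ℝ) :
    ℝ × ℝ × ℝ :=
  fderiv ℝ X p w - dot3 (fderiv ℝ X p w) (n p) • n p

/-- projected covariant derivatives of the Euler-angle frame:
∇_w u = (∇_w(θ+φ) + cos γ ∇_w ψ) v and ∇_w v = −(∇_w(θ+φ) + cos γ ∇_w ψ) u. -/
theorem stmt4 (Ω : Set (ℝ × ℝ × ℝ)) (hΩ : IsOpen Ω)
    (θ φ ψ γ : ℝ × ℝ × ℝ → ℝ)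
    (hθ : ContDiffOn ℝ (⊤ : ℕ∞) θ Ω) (hφ : ContDiffOn ℝ (⊤ : ℕ∞) φ Ω)
    (hψ : ContDiffOn ℝ (⊤ : ℕ∞) ψ Ω) (hγ : ContDiffOn ℝ (⊤ : ℕ∞) γ Ω)
    (u v n : ℝ × ℝ × ℝ → ℝ × ℝ × ℝ)
    (hu : ∀ p, u p = (-Real.sin (θ p + φ p) * Real.sin (ψ p) * Real.cos (γ p)
                        + Real.cos (θ p + φ p) * Real.cos (ψ p),
                      Real.sin (θ p + φ p) * Real.cos (ψ p) * Real.cos (γ p)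
                        + Real.sin (ψ p) * Real.cos (θ p + φ p),
                      Real.sin (θ p + φ p) * Real.sin (γ p)))
    (hv : ∀ p, v p = (-Real.sin (θ p + φ p) * Real.cos (ψ p)
                        - Real.sin (ψ p) * Real.cos (θ p + φ p) * Real.cos (γ p),
                      -Real.sin (θ p + φ p) * Real.sin (ψ p)
                        + Real.cos (θ p + φ p) * Real.cos (ψ p) * Real.cos (γ p),
                      Real.sin (γ p) * Real.cos (θ p + φ p)))
    (hn : ∀ p, n p = (Real.sin (ψ p) * Real.sin (γ p),
                      -Real.sin (γ p) * Real.cos (ψ p),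
                      Real.cos (γ p))) :
    ∀ p ∈ Ω, ∀ w : ℝ × ℝ × ℝ,
      tangDeriv n u p w =
        ((fderiv ℝ θ p w + fderiv ℝ φ p w) + Real.cos (γ p) * fderiv ℝ ψ p w) • v p ∧
      tangDeriv n v p w =
        -(((fderiv ℝ θ p w + fderiv ℝ φ p w) + Real.cos (γ p) * fderiv ℝ ψ p w)) • u p := by
  intro p hp w
  have hmem : Ω ∈ nhds p := hΩ.mem_nhds hp
  have Hθ : HasFDerivAt θ (fderiv ℝ θ p) p :=
    ((hθ.contDiffAt hmem).differentiableAt (by simp)).hasFDerivAt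
  have Hφ : HasFDerivAt φ (fderiv ℝ φ p) p :=
    ((hφ.contDiffAt hmem).differentiableAt (by simp)).hasFDerivAt
  have Hψ : HasFDerivAt ψ (fderiv ℝ ψ p) p :=
    ((hψ.contDiffAt hmem).differentiableAt (by simp)).hasFDerivAt
  have Hγ : HasFDerivAt γ (fderiv ℝ γ p) p :=
    ((hγ.contDiffAt hmem).differentiableAt (by simp)).hasFDerivAt
  have Ha : HasFDerivAt (fun q => θ q + φ q) (fderiv ℝ θ p + fderiv ℝ φ p) p := Hθ.add Hφ
  have Hsa : HasFDerivAt (fun q => Real.sin (θ q + φ q))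
      (Real.cos (θ p + φ p) • (fderiv ℝ θ p + fderiv ℝ φ p)) p :=
    (Real.hasDerivAt_sin _).comp_hasFDerivAt p Ha
  have Hca : HasFDerivAt (fun q => Real.cos (θ q + φ q))
      ((-Real.sin (θ p + φ p)) • (fderiv ℝ θ p + fderiv ℝ φ p)) p :=
    (Real.hasDerivAt_cos _).comp_hasFDerivAt p Ha
  have Hsp : HasFDerivAt (fun q => Real.sin (ψ q)) (Real.cos (ψ p) • fderiv ℝ ψ p) p :=
    (Real.hasDerivAt_sin _).comp_hasFDerivAt p Hψ
  have Hcp : HasFDerivAt (fun q => Real.cos (ψ q)) ((-Real.sin (ψ p)) • fderiv ℝ ψ p) p :=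
    (Real.hasDerivAt_cos _).comp_hasFDerivAt p Hψ
  have Hsg : HasFDerivAt (fun q => Real.sin (γ q)) (Real.cos (γ p) • fderiv ℝ γ p) p :=
    (Real.hasDerivAt_sin _).comp_hasFDerivAt p Hγ
  have Hcg : HasFDerivAt (fun q => Real.cos (γ q)) ((-Real.sin (γ p)) • fderiv ℝ γ p) p :=
    (Real.hasDerivAt_cos _).comp_hasFDerivAt p Hγ
  have hu' : u = fun q => (-Real.sin (θ q + φ q) * Real.sin (ψ q) * Real.cos (γ q)
                        + Real.cos (θ q + φ q) * Real.cos (ψ q),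
                      Real.sin (θ q + φ q) * Real.cos (ψ q) * Real.cos (γ q)
                        + Real.sin (ψ q) * Real.cos (θ q + φ q),
                      Real.sin (θ q + φ q) * Real.sin (γ q)) := funext hu
  have hv' : v = fun q => (-Real.sin (θ q + φ q) * Real.cos (ψ q)
                        - Real.sin (ψ q) * Real.cos (θ q + φ q) * Real.cos (γ q),
                      -Real.sin (θ q + φ q) * Real.sin (ψ q)
                        + Real.cos (θ q + φ q) * Real.cos (ψ q) * Real.cos (γ q),
                      Real.sin (γ q) * Real.cos (θ q + φ q)) := funext hv
  have hn' : n = fun q => (Real.sin (ψ q) * Real.sin (γ q),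
                      -Real.sin (γ q) * Real.cos (ψ q),
                      Real.cos (γ q)) := funext hn
  subst hu' hv' hn'
  have Hu1 := ((Hsa.neg.mul Hsp).mul Hcg).add (Hca.mul Hcp)
  have Hu2 := ((Hsa.mul Hcp).mul Hcg).add (Hsp.mul Hca)
  have Hu3 := Hsa.mul Hsg
  have Hv1 := (Hsa.neg.mul Hcp).sub ((Hsp.mul Hca).mul Hcg)
  have Hv2 := (Hsa.neg.mul Hsp).add ((Hca.mul Hcp).mul Hcg)
  have Hv3 := Hsg.mul Hca
  have Hu : HasFDerivAt (fun q => (-Real.sin (θ q + φ q) * Real.sin (ψ q) * Real.cos (γ q)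
                        + Real.cos (θ q + φ q) * Real.cos (ψ q),
                      Real.sin (θ q + φ q) * Real.cos (ψ q) * Real.cos (γ q)
                        + Real.sin (ψ q) * Real.cos (θ q + φ q),
                      Real.sin (θ q + φ q) * Real.sin (γ q))) _ p := Hu1.prodMk (Hu2.prodMk Hu3)
  have Hv : HasFDerivAt (fun q => (-Real.sin (θ q + φ q) * Real.cos (ψ q)
                        - Real.sin (ψ q) * Real.cos (θ q + φ q) * Real.cos (γ q),
                      -Real.sin (θ q + φ q) * Real.sin (ψ q)
                        + Real.cos (θ q + φ q) * Real.cos (ψ q) * Real.cos (γ q),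
                      Real.sin (γ q) * Real.cos (θ q + φ q))) _ p := Hv1.prodMk (Hv2.prodMk Hv3)
  have hpψ : Real.sin (ψ p) ^ 2 + Real.cos (ψ p) ^ 2 = 1 := Real.sin_sq_add_cos_sq _
  have hpγ : Real.sin (γ p) ^ 2 + Real.cos (γ p) ^ 2 = 1 := Real.sin_sq_add_cos_sq _
  simp only [tangDeriv, dot3, Hu.fderiv, Hv.fderiv, ContinuousLinearMap.prod_apply,
    ContinuousLinearMap.add_apply, ContinuousLinearMap.coe_smul', Pi.smul_apply,
    ContinuousLinearMap.smul_apply, ContinuousLinearMap.neg_apply, ContinuousLinearMap.sub_apply,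
    smul_eq_mul, Prod.smul_mk, Prod.mk_sub_mk, Prod.mk.injEq, Prod.neg_mk, neg_smul, Pi.mul_apply, Pi.neg_apply]
  refine ⟨⟨?_, ?_, ?_⟩, ?_, ?_, ?_⟩
  · linear_combination (Real.cos (θ p + φ p) * Real.sin (ψ p) * Real.sin (γ p) * Real.sin (γ p) * fderiv ℝ ψ p w + Real.cos (θ p + φ p) * Real.sin (ψ p) * Real.sin (γ p) * Real.sin (γ p) * Real.cos (γ p) * (fderiv ℝ θ p w + fderiv ℝ φ p w) + (-1) * Real.sin (θ p + φ p) * Real.sin (ψ p) * Real.sin (γ p) * Real.sin (γ p) * Real.sin (γ p) * fderiv ℝ γ p w) * hpψ + (Real.cos (θ p + φ p) * Real.sin (ψ p) * fderiv ℝ ψ p w + (-1) * Real.sin (θ p + φ p) * Real.sin (ψ p) * Real.sin (γ p) * fderiv ℝ γ p w) * hpγ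
  · linear_combination ((-1) * Real.cos (θ p + φ p) * Real.cos (ψ p) * Real.sin (γ p) * Real.sin (γ p) * fderiv ℝ ψ p w + (-1) * Real.cos (θ p + φ p) * Real.cos (ψ p) * Real.sin (γ p) * Real.sin (γ p) * Real.cos (γ p) * (fderiv ℝ θ p w + fderiv ℝ φ p w) + Real.sin (θ p + φ p) * Real.cos (ψ p) * Real.sin (γ p) * Real.sin (γ p) * Real.sin (γ p) * fderiv ℝ γ p w) * hpψ + ((-1) * Real.cos (θ p + φ p) * Real.cos (ψ p) * fderiv ℝ ψ p w + Real.sin (θ p + φ p) * Real.cos (ψ p) * Real.sin (γ p) * fderiv ℝ γ p w) * hpγ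
  · linear_combination (Real.cos (θ p + φ p) * Real.sin (γ p) * Real.cos (γ p) * fderiv ℝ ψ p w + Real.cos (θ p + φ p) * Real.sin (γ p) * Real.cos (γ p) * Real.cos (γ p) * (fderiv ℝ θ p w + fderiv ℝ φ p w) + (-1) * Real.sin (θ p + φ p) * Real.sin (γ p) * Real.sin (γ p) * Real.cos (γ p) * fderiv ℝ γ p w) * hpψ + ((-1) * Real.sin (θ p + φ p) * Real.cos (γ p) * fderiv ℝ γ p w) * hpγ
  · linear_combination ((-1) * Real.cos (θ p + φ p) * Real.sin (ψ p) * Real.sin (γ p) * Real.sin (γ p) * Real.sin (γ p) * fderiv ℝ γ p w + (-1) * Real.sin (θ p + φ p) * Real.sin (ψ p) * Real.sin (γ p) * Real.sin (γ p) * fderiv ℝ ψ p w + (-1) * Real.sin (θ p + φ p) * Real.sin (ψ p) * Real.sin (γ p) * Real.sin (γ p) * Real.cos (γ p) * (fderiv ℝ θ p w + fderiv ℝ φ p w)) * hpψ + ((-1) * Real.cos (θ p + φ p) * Real.sin (ψ p) * Real.sin (γ p) * fderiv ℝ γ p w + (-1) * Real.sin (θ p + φ p) * Real.sin (ψ p)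 * fderiv ℝ ψ p w) * hpγ
  · linear_combination (Real.cos (θ p + φ p) * Real.cos (ψ p) * Real.sin (γ p) * Real.sin (γ p) * Real.sin (γ p) * fderiv ℝ γ p w + Real.sin (θ p + φ p) * Real.cos (ψ p) * Real.sin (γ p) * Real.sin (γ p) * fderiv ℝ ψ p w + Real.sin (θ p + φ p) * Real.cos (ψ p) * Real.sin (γ p) * Real.sin (γ p) * Real.cos (γ p) * (fderiv ℝ θ p w + fderiv ℝ φ p w)) * hpψ + (Real.cos (θ p + φ p) * Real.cos (ψ p) * Real.sin (γ p) * fderiv ℝ γ p w + Real.sin (θ p + φ p) * Real.cos (ψ p) * fderiv ℝ ψ p w) * hpγ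
  · linear_combination ((-1) * Real.cos (θ p + φ p) * Real.sin (γ p) * Real.sin (γ p) * Real.cos (γ p) * fderiv ℝ γ p w + (-1) * Real.sin (θ p + φ p) * Real.sin (γ p) * Real.cos (γ p) * fderiv ℝ ψ p w + (-1) * Real.sin (θ p + φ p) * Real.sin (γ p) * Real.cos (γ p) * Real.cos (γ p) * (fderiv ℝ θ p w + fderiv ℝ φ p w)) * hpψ + ((-1) * Real.cos (θ p + φ p) * Real.cos (γ p) * fderiv ℝ γ p w) * hpγ
end

section
/- Let γ be a unit-speed curve on an oriented surface M ⊂ ℝ³ with Darboux frame (T, t, n), where t = n × T. If a smooth function H on M satisfies the conformal integrability conditions ∇_T H = −⟨t, [T,t]⟩ along the boundary where the frame field extends (T,t) as the cross-field directions, then ∇_t H = −κ_g, where κ_g = ⟨γ'', t⟩ is the geodesic curvature of γ. -/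
open Real

/-- Cross product on ℝ × ℝ × ℝ. -/
def cross3 (a b : ℝ × ℝ × ℝ) : ℝ × ℝ × ℝ :=
  (a.2.1 * b.2.2 - a.2.2 * b.2.1,
   a.2.2 * b.1 - a.1 * b.2.2,
   a.1 * b.2.1 - a.2.1 * b.1)

lemma dot3_comm (a b : ℝ × ℝ × ℝ) : dot3 a b = dot3 b a := by simp [dot3]; ring

lemma dot3_sub_right (a b c : ℝ × ℝ × ℝ) : dot3 a (b - c) = dot3 a b - dot3 a c := by
  simp [dot3]; ring

lemma dot3_smul_right (a : ℝ × ℝ × ℝ) (r : ℝ) (b : ℝ × ℝ × ℝ) :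
    dot3 a (r • b) = r * dot3 a b := by
  simp [dot3]; ring

lemma fderiv_dot3 (f g : ℝ×ℝ×ℝ → ℝ×ℝ×ℝ) (hf : Differentiable ℝ f)
    (hg : Differentiable ℝ g) (p w : ℝ×ℝ×ℝ) :
    fderiv ℝ (fun q => dot3 (f q) (g q)) p w
      = dot3 (fderiv ℝ f p w) (g p) + dot3 (f p) (fderiv ℝ g p w) := by
  have Hf := (hf p).hasFDerivAt
  have Hg := (hg p).hasFDerivAt
  have h := ((Hf.fst.mul Hg.fst).add ((Hf.snd.fst.mul Hg.snd.fst).add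
      (Hf.snd.snd.mul Hg.snd.snd)))
  have h2 : HasFDerivAt (fun q => dot3 (f q) (g q)) _ p :=
    h.congr_of_eventuallyEq (by filter_upwards with q; simp [dot3]; ring)
  rw [h2.fderiv]
  simp [dot3]
  ring

/-- along a unit-speed curve γ on an oriented surface with Darboux frame
(T, t, n), t = n × T, if H satisfies the conformal integrability conditions
∇_u H = −⟨v,[u,v]⟩, ∇_v H = ⟨u,[u,v]⟩ with (u,v) = (T,t), then
∇_t H = −κ_g where κ_g = ⟨γ'', t⟩. -/
theorem stmt8 (T t n : ℝ × ℝ × ℝ → ℝ × ℝ × ℝ) (H : ℝ × ℝ × ℝ → ℝ)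
    (hT : ContDiff ℝ (⊤ : ℕ∞) T) (htc : ContDiff ℝ (⊤ : ℕ∞) t) (hn : ContDiff ℝ (⊤ : ℕ∞) n)
    (hH : ContDiff ℝ (⊤ : ℕ∞) H)
    (hTT : ∀ p, dot3 (T p) (T p) = 1) (hnn : ∀ p, dot3 (n p) (n p) = 1)
    (hTn : ∀ p, dot3 (T p) (n p) = 0)
    (ht : ∀ p, t p = cross3 (n p) (T p))
    (hint1 : ∀ p, fderiv ℝ H p (T p) =
      - dot3 (t p) (tangDeriv n t p (T p) - tangDeriv n T p (t p)))
    (hint2 : ∀ p, fderiv ℝ H p (t p) =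
      dot3 (T p) (tangDeriv n t p (T p) - tangDeriv n T p (t p)))
    (γc : ℝ → ℝ × ℝ × ℝ) (hγ : ContDiff ℝ (⊤ : ℕ∞) γc)
    (hspeed : ∀ s, deriv γc s = T (γc s)) :
    ∀ s, fderiv ℝ H (γc s) (t (γc s)) = - dot3 (deriv (deriv γc) s) (t (γc s)) := by
  intro s
  set p := γc s with hp
  have hTd : Differentiable ℝ T := hT.differentiable (by simp)
  have htd : Differentiable ℝ t := htc.differentiable (by simp)
  -- γ'' = ∇_T T
  have hγ'' : deriv (deriv γc) s = fderiv ℝ T p (T p) := by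
    have h1 : deriv γc = fun u => T (γc u) := funext hspeed
    have hder : HasDerivAt (fun u => T (γc u)) (fderiv ℝ T (γc s) (deriv γc s)) s :=
      (hTd (γc s)).hasFDerivAt.comp_hasDerivAt s
        (hγ.differentiable (by simp) s).hasDerivAt
    rw [h1, hder.deriv, hspeed s]
  set a := fderiv ℝ t p (T p) with ha
  set b := fderiv ℝ T p (t p) with hb
  set c := fderiv ℝ T p (T p) with hc
  -- ⟨t,T⟩ = 0 everywhere
  have htT : ∀ q, dot3 (t q) (T q) = 0 := by
    intro q; rw [ht q]; simp [dot3, cross3]; ring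
  -- differentiate ⟨t,T⟩ = 0 along T
  have h1 : dot3 a (T p) + dot3 (t p) c = 0 := by
    have := fderiv_dot3 t T htd hTd p (T p)
    rw [show (fun q => dot3 (t q) (T q)) = fun _ => (0:ℝ) from funext htT] at this
    simpa using this.symm
  -- differentiate ⟨T,T⟩ = 1 along t
  have h2 : dot3 b (T p) + dot3 (T p) b = 0 := by
    have := fderiv_dot3 T T hTd hTd p (t p)
    rw [show (fun q => dot3 (T q) (T q)) = fun _ => (1:ℝ) from funext hTT] at this
    simpa using this.symm
  have hTb : dot3 (T p) b = 0 := by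
    have := dot3_comm b (T p); linarith [h2]
  have hTa : dot3 (T p) a = - dot3 c (t p) := by
    rw [dot3_comm (T p) a, dot3_comm c (t p)]; linarith [h1, dot3_comm (t p) c]
  rw [hint2 p, hγ'']
  unfold tangDeriv
  rw [← ha, ← hb]
  rw [dot3_sub_right, dot3_sub_right, dot3_sub_right, dot3_smul_right, dot3_smul_right,
    hTn p, hTa, hTb]
  ring
end
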